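/- For every natural number m and every real number z, one has Σ_{0≤l≤n≤m} (-1)^n · C(n,l) · C(l+(m+1)z, m-n) · (1+z)^{n-l} · (1-z)^{n+l} = (m+1) · C((m+1)z-1, m). -/

import Mathlib

/-!
Expanding `C(l + x, m - n)` by Chu–Vandermonde and summing over `l` with the trinomial revision
`C(n, l) C(l, i) = C(n, i) C(n - i, l - i)` merges `(1 + z) + (1 - z)` into `2`. Regrouping by
`j = n + i` then produces the explicit form of the Chebyshev value `U_j(-1) = (-1)^j (j + 1)`, so
with `x = (m + 1) z` the sum becomes `Σ_j (j + 1) (z - 1)^j C(x, m - j)`, the coefficient of `t^m`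
in `(1 + t)^x / (1 - (z - 1) t)^2`. Pascal's rule and absorption reduce this to
`(m + 1) C(x - 1, m)` precisely because `x = (m + 1) (1 + (z - 1))`.
-/

open Finset PowerSeries

/-- Generalized binomial coefficient `C(x, k) = x(x-1)⋯(x-k+1)/k!` for real `x`. -/
noncomputable def gchoose (x : ℝ) (k : ℕ) : ℝ :=
  (∏ i ∈ Finset.range k, (x - i)) / (Nat.factorial k)

/-- The binomial series `(1+t)^x = Σ C(x,k) t^k` as a formal power series. -/
noncomputable def binomSeries (x : ℝ) : PowerSeries ℝ :=
  PowerSeries.mk fun k => gchoose x k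

theorem gchoose_eq_choose (x : ℝ) (k : ℕ) : gchoose x k = Ring.choose x k := by
  rw [Ring.choose_eq_smul, ← Polynomial.aeval_eq_smeval, ← Polynomial.eval_map_algebraMap,
    descPochhammer_map, descPochhammer_eval_eq_prod_range, gchoose, smul_eq_mul, inv_mul_eq_div]

section CommSemiring

variable {R : Type*} [CommSemiring R]

theorem sum_range_choose_mul_choose_mul_pow_mul_pow (a b : R) (n i : ℕ) :
    ∑ l ∈ range (n + 1), (n.choose l * l.choose i : R) * a ^ (n - l) * b ^ l =
      n.choose i * b ^ i * (a + b) ^ (n - i) := by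
  rcases lt_or_ge n i with hni | hin
  · rw [Nat.choose_eq_zero_of_lt hni, Nat.cast_zero, zero_mul, zero_mul]
    refine sum_eq_zero fun l hl => ?_
    rw [Nat.choose_eq_zero_of_lt (hni.trans_le' (Nat.lt_succ_iff.1 (mem_range.1 hl)))]
    simp
  obtain ⟨d, rfl⟩ := Nat.exists_eq_add_of_le hin
  rw [add_assoc, sum_range_add, sum_eq_zero fun l hl => ?_, zero_add, add_tsub_cancel_left,
    add_comm a, add_pow, mul_sum]
  · refine sum_congr rfl fun k _ => ?_
    have key := Nat.choose_mul (n := i + d) (k := i + k) (s := i) (Nat.le_add_right i k)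
    rw [add_tsub_cancel_left, add_tsub_cancel_left] at key
    rw [← Nat.cast_mul, key, Nat.cast_mul, Nat.add_sub_add_left, pow_add]
    ring
  · simp [Nat.choose_eq_zero_of_lt (mem_range.1 hl)]

end CommSemiring

theorem sum_antidiagonal_sum_antidiagonal_assoc {M : Type*} [AddCommMonoid M] (m : ℕ)
    (f : ℕ → ℕ → ℕ → M) :
    ∑ p ∈ antidiagonal m, ∑ q ∈ antidiagonal p.2, f p.1 q.1 q.2 =
      ∑ p ∈ antidiagonal m, ∑ q ∈ antidiagonal p.1, f q.1 q.2 p.2 := by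
  rw [sum_sigma', sum_sigma']
  refine sum_nbij' (fun s => ⟨(s.1.1 + s.2.1, s.2.2), (s.1.1, s.2.1)⟩)
    (fun s => ⟨(s.2.1, s.2.2 + s.1.2), (s.2.2, s.1.2)⟩) ?_ ?_ ?_ ?_ fun _ _ => rfl
  all_goals
    rintro ⟨⟨_, _⟩, ⟨_, _⟩⟩ h
    simp only [mem_sigma, HasAntidiagonal.mem_antidiagonal] at h
  · simp only [mem_sigma, HasAntidiagonal.mem_antidiagonal, and_true]; omega
  · simp only [mem_sigma, HasAntidiagonal.mem_antidiagonal, and_true]; omega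
  · simp [← h.2]
  · simp [← h.2]

section CommRing

variable {R : Type*} [CommRing R]

theorem sum_antidiagonal_neg_one_pow_mul_choose_mul_two_pow (j : ℕ) :
    ∑ p ∈ antidiagonal j, (-1 : R) ^ p.1 * p.1.choose p.2 * 2 ^ (p.1 - p.2) =
      (-1) ^ j * (j + 1) := by
  set f : ℕ × ℕ → R := fun p => (-1 : R) ^ p.1 * p.1.choose p.2 * 2 ^ (p.1 - p.2)
  have pascal (n i : ℕ) : f (n + 1, i + 1) = -f (n, i) - 2 * f (n, i + 1) := by
    rcases lt_or_ge n (i + 1) with hni | hin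
    · simp [f, Nat.choose_succ_succ, Nat.choose_eq_zero_of_lt hni, pow_succ]
    · simp only [f, Nat.choose_succ_succ, Nat.add_sub_add_right, Nat.cast_add, pow_succ]
      rw [show n - i = n - (i + 1) + 1 by omega, pow_succ]
      ring
  have recurrence (j : ℕ) : ∑ p ∈ antidiagonal (j + 2), f p =
      -2 * ∑ p ∈ antidiagonal (j + 1), f p - ∑ p ∈ antidiagonal j, f p := by
    rw [Nat.sum_antidiagonal_succ, Nat.sum_antidiagonal_succ',
      Nat.sum_antidiagonal_succ' (n := j)]
    simp only [pascal, sum_sub_distrib, ← mul_sum]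
    simp [f, pow_succ]
    ring
  induction j using Nat.twoStepInduction with
  | zero => simp [f]
  | one => simp [f, Nat.sum_antidiagonal_succ]; norm_num
  | more j ih₀ ih₁ =>
    rw [recurrence, ih₀, ih₁]
    push_cast
    ring

end CommRing

namespace Ring

variable {R : Type*} [CommRing R] [BinomialRing R]

theorem sum_range_choose_mul_choose_natCast_add_mul_pow_mul_pow (a b x : R) (n k : ℕ) :
    ∑ l ∈ range (n + 1), (n.choose l : R) * choose (l + x) k * a ^ (n - l) * b ^ l =
      ∑ p ∈ antidiagonal k, (n.choose p.1 : R) * b ^ p.1 * (a + b) ^ (n - p.1) * choose x p.2 := by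
  simp_rw [add_choose_eq k (Nat.cast_commute _ x), choose_natCast, mul_sum, sum_mul]
  rw [sum_comm]
  refine sum_congr rfl fun p _ => ?_
  rw [← sum_range_choose_mul_choose_mul_pow_mul_pow, sum_mul]
  exact sum_congr rfl fun l _ => by ring

theorem sum_range_sum_range_neg_one_pow_mul_choose_mul_choose_natCast_add (a b x : R) (m : ℕ) :
    ∑ n ∈ range (m + 1), ∑ l ∈ range (n + 1),
        (-1) ^ n * (n.choose l : R) * choose (l + x) (m - n) * a ^ (n - l) * b ^ (n + l) =
      ∑ p ∈ antidiagonal m, b ^ p.1 *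
        (∑ q ∈ antidiagonal p.1, (-1) ^ q.1 * q.1.choose q.2 * (a + b) ^ (q.1 - q.2)) *
          choose x p.2 := calc
  _ = ∑ p ∈ antidiagonal m, ∑ q ∈ antidiagonal p.2, b ^ (p.1 + q.1) *
        ((-1) ^ p.1 * p.1.choose q.1 * (a + b) ^ (p.1 - q.1)) * choose x q.2 := by
    rw [Nat.sum_antidiagonal_eq_sum_range_succ fun n k => ∑ q ∈ antidiagonal k,
      b ^ (n + q.1) * ((-1) ^ n * n.choose q.1 * (a + b) ^ (n - q.1)) * choose x q.2]
    refine sum_congr rfl fun n _ => ?_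
    have := congrArg ((-1) ^ n * b ^ n * ·)
      (sum_range_choose_mul_choose_natCast_add_mul_pow_mul_pow a b x n (m - n))
    simp only [mul_sum] at this
    convert this using 2 <;> ring
  _ = ∑ p ∈ antidiagonal m, ∑ q ∈ antidiagonal p.1, b ^ (q.1 + q.2) *
        ((-1) ^ q.1 * q.1.choose q.2 * (a + b) ^ (q.1 - q.2)) * choose x p.2 :=
    sum_antidiagonal_sum_antidiagonal_assoc m fun n i r =>
      b ^ (n + i) * ((-1) ^ n * n.choose i * (a + b) ^ (n - i)) * choose x r
  _ = _ := by
    refine sum_congr rfl fun p _ => ?_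
    rw [mul_sum, sum_mul]
    refine sum_congr rfl fun q hq => ?_
    rw [HasAntidiagonal.mem_antidiagonal.1 hq, mul_assoc]

/-- The coefficient of `t ^ m` in `(1 + t) ^ x / (1 - y t)`. -/
def geomBinomCoeff (y x : R) (m : ℕ) : R :=
  ∑ p ∈ antidiagonal m, y ^ p.1 * choose x p.2

theorem geomBinomCoeff_succ (y x : R) (m : ℕ) :
    geomBinomCoeff y x (m + 1) = y * geomBinomCoeff y x m + choose x (m + 1) := by
  rw [geomBinomCoeff, geomBinomCoeff, Nat.sum_antidiagonal_succ, mul_sum, add_comm]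
  simp [pow_succ, mul_assoc, mul_comm y]

theorem geomBinomCoeff_add_one_succ (y x : R) (m : ℕ) :
    geomBinomCoeff y (x + 1) (m + 1) = geomBinomCoeff y x (m + 1) + geomBinomCoeff y x m := by
  simp only [geomBinomCoeff, Nat.sum_antidiagonal_succ' (n := m), choose_succ_succ, mul_add,
    sum_add_distrib, choose_zero_right]
  ring

theorem sum_antidiagonal_mul_pow_mul_choose (y x : R) (m : ℕ) :
    ∑ p ∈ antidiagonal (m + 1), (p.2 : R) * y ^ p.1 * choose x p.2 =
      x * geomBinomCoeff y (x - 1) m := by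
  have absorb (i : ℕ) : ((i + 1 : ℕ) : R) * choose x (i + 1) = x * choose (x - 1) i := by
    simpa [nsmul_eq_mul] using choose_smul_choose x (Nat.le_add_left 1 i)
  rw [Nat.sum_antidiagonal_succ', geomBinomCoeff, mul_sum]
  simp only [Nat.cast_zero, zero_mul, zero_add]
  exact sum_congr rfl fun p _ => by linear_combination y ^ p.1 * absorb p.2

theorem sum_antidiagonal_succ_mul_pow_mul_choose {x y : R} {m : ℕ}
    (hx : x = (m + 1) * (y + 1)) :
    ∑ p ∈ antidiagonal m, ((p.1 : R) + 1) * y ^ p.1 * choose x p.2 =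
      (m + 1) * choose (x - 1) m := by
  cases m with
  | zero => simp
  | succ m =>
    have hsplit : ∑ p ∈ antidiagonal (m + 1), ((p.1 : R) + 1) * y ^ p.1 * choose x p.2 =
        (m + 2) * geomBinomCoeff y x (m + 1) -
          ∑ p ∈ antidiagonal (m + 1), (p.2 : R) * y ^ p.1 * choose x p.2 := by
      rw [geomBinomCoeff, mul_sum, ← sum_sub_distrib]
      refine sum_congr rfl fun p hp => ?_
      have : (p.1 : R) + p.2 = m + 1 := by
        rw [← Nat.cast_add, HasAntidiagonal.mem_antidiagonal.1 hp, Nat.cast_succ]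
      linear_combination (y ^ p.1 * choose x p.2) * this
    have hpascal := geomBinomCoeff_add_one_succ y (x - 1) m
    rw [sub_add_cancel] at hpascal
    rw [hsplit, sum_antidiagonal_mul_pow_mul_choose, hpascal, geomBinomCoeff_succ, hx]
    push_cast
    ring

end Ring

theorem sun_wu_corollary (m : ℕ) (z : ℝ) :
    ∑ n ∈ Finset.range (m + 1), ∑ l ∈ Finset.range (n + 1),
        (-1 : ℝ) ^ n * (n.choose l : ℝ) * gchoose (l + (m + 1) * z) (m - n) *
          (1 + z) ^ (n - l) * (1 - z) ^ (n + l) =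
      (m + 1) * gchoose ((m + 1) * z - 1) m := by
  simp_rw [gchoose_eq_choose]
  rw [Ring.sum_range_sum_range_neg_one_pow_mul_choose_mul_choose_natCast_add,
    show (1 + z) + (1 - z) = (2 : ℝ) by ring,
    ← Ring.sum_antidiagonal_succ_mul_pow_mul_choose (y := z - 1) (by ring)]
  refine sum_congr rfl fun p _ => ?_
  rw [sum_antidiagonal_neg_one_pow_mul_choose_mul_two_pow, ← neg_sub 1 z, neg_pow (1 - z)]
  ring
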